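/- For any metric Jordan curve Γ and any subarc A ⊂ Γ, the diameter of A with respect to the diameter distance dd equals the diameter of A with respect to the original metric: diam_dd A = diam A. -/

import Mathlib

open Metric Set

noncomputable section

abbrev S1 := AddCircle (1 : ℝ)

/-- The closed arc on the unit circle from `x` counterclockwise to `y`. -/
def arcCCW (x y : S1) : Set S1 :=
  (fun t : ℝ => x + (t : S1)) '' Set.Icc 0 ((AddCircle.equivIco 1 0 (y - x) : ℝ))

/-- The diameter distance on a Jordan curve `Γ` parametrized by `e : S1 ≃ₜ Γ`:
the diameter of the subarc of smaller diameter between `x` and `y`. -/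
def ddist {Γ : Type*} [MetricSpace Γ] (e : S1 ≃ₜ Γ) (x y : Γ) : ℝ :=
  min (diam (e '' arcCCW (e.symm x) (e.symm y))) (diam (e '' arcCCW (e.symm y) (e.symm x)))

/-- `f` is an `H`-weak-quasisymmetry. -/
def IsWeakQS {X Y : Type*} [MetricSpace X] [MetricSpace Y] (f : X → Y) (H : ℝ) : Prop :=
  ∀ x y z : X, dist x y ≤ dist x z → dist (f x) (f y) ≤ H * dist (f x) (f z)

/-! `dist x y ≤ dd x y` because both arcs between `x` and `y` contain `x` and `y`;
conversely, for `x, y` on a subarc `A` one of the two arcs between them lies inside `A`, so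
`dd x y ≤ diam A`. Hence the supremum of `dd` over `A × A` is squeezed onto `diam A`. -/

theorem Metric.sSup_image2_eq_diam {X : Type*} [PseudoMetricSpace X] {f : X → X → ℝ}
    {s : Set X} (dist_le : ∀ x ∈ s, ∀ y ∈ s, dist x y ≤ f x y)
    (le_diam : ∀ x ∈ s, ∀ y ∈ s, f x y ≤ diam s) :
    sSup (image2 f s s) = diam s := by
  have hbdd : BddAbove (image2 f s s) := ⟨diam s, forall_mem_image2.2 le_diam⟩
  refine le_antisymm (Real.sSup_le (forall_mem_image2.2 le_diam) diam_nonneg) ?_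
  have hnonneg : 0 ≤ sSup (image2 f s s) :=
    Real.sSup_nonneg <| forall_mem_image2.2 fun x hx y hy => dist_nonneg.trans (dist_le x hx y hy)
  exact diam_le_of_forall_dist_le hnonneg fun x hx y hy =>
    (dist_le x hx y hy).trans (le_csSup hbdd (mem_image2_of_mem hx hy))

namespace arcCCW

lemma left_mem (x y : S1) : x ∈ arcCCW x y :=
  ⟨0, ⟨le_rfl, (AddCircle.equivIco 1 0 (y - x)).2.1⟩, by simp⟩

lemma right_mem (x y : S1) : y ∈ arcCCW x y :=
  ⟨_, ⟨(AddCircle.equivIco 1 0 (y - x)).2.1, le_rfl⟩, by simp⟩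

lemma isCompact (x y : S1) : IsCompact (arcCCW x y) :=
  isCompact_Icc.image (continuous_const.add (AddCircle.continuous_mk' 1))

lemma subset_of_le {a b : S1} {s u : ℝ} (hs : 0 ≤ s) (hsu : s ≤ u)
    (hu : u ≤ (AddCircle.equivIco 1 0 (b - a) : ℝ)) :
    arcCCW (a + (s : S1)) (a + (u : S1)) ⊆ arcCCW a b := by
  have hlen_lt : (AddCircle.equivIco 1 0 (b - a) : ℝ) < 1 := by
    simpa using (AddCircle.equivIco 1 0 (b - a)).2.2
  have hlen : (AddCircle.equivIco 1 0 (a + (u : S1) - (a + (s : S1))) : ℝ) = u - s := by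
    rw [add_sub_add_left_eq_sub, ← AddCircle.coe_sub]
    exact AddCircle.equivIco_coe_of_mem ⟨by linarith, by linarith⟩
  rintro _ ⟨t, ht, rfl⟩
  rw [hlen] at ht
  refine ⟨s + t, ⟨by linarith [ht.1], by linarith [ht.2]⟩, ?_⟩
  simp only [AddCircle.coe_add, add_assoc]

lemma subset_or_subset {a b p q : S1} (hp : p ∈ arcCCW a b) (hq : q ∈ arcCCW a b) :
    arcCCW p q ⊆ arcCCW a b ∨ arcCCW q p ⊆ arcCCW a b := by
  obtain ⟨s, hs, rfl⟩ := hp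
  obtain ⟨u, hu, rfl⟩ := hq
  rcases le_total s u with h | h
  · exact .inl (subset_of_le hs.1 h hu.2)
  · exact .inr (subset_of_le hu.1 h hs.2)

end arcCCW

section DiameterDistance

variable {Γ : Type*} [MetricSpace Γ] (e : S1 ≃ₜ Γ)

lemma isBounded_image_arcCCW (x y : S1) : Bornology.IsBounded (e '' arcCCW x y) :=
  ((arcCCW.isCompact x y).image e.continuous).isBounded

lemma dist_le_ddist (p q : Γ) : dist p q ≤ ddist e p q := by
  have h (x y : S1) : dist (e x) (e y) ≤ diam (e '' arcCCW x y) :=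
    dist_le_diam_of_mem (isBounded_image_arcCCW e x y)
      (mem_image_of_mem e (arcCCW.left_mem x y)) (mem_image_of_mem e (arcCCW.right_mem x y))
  refine le_min ?_ ?_
  · simpa using h (e.symm p) (e.symm q)
  · simpa [dist_comm] using h (e.symm q) (e.symm p)

lemma ddist_le_diam_image_arcCCW {a b : S1} {p q : Γ} (hp : p ∈ e '' arcCCW a b)
    (hq : q ∈ e '' arcCCW a b) : ddist e p q ≤ diam (e '' arcCCW a b) := by
  obtain ⟨x, hx, rfl⟩ := hp
  obtain ⟨y, hy, rfl⟩ := hq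
  have hmono {s : Set S1} (h : s ⊆ arcCCW a b) : diam (e '' s) ≤ diam (e '' arcCCW a b) :=
    diam_mono (image_mono h) (isBounded_image_arcCCW e a b)
  rcases arcCCW.subset_or_subset hx hy with h | h
  · simpa only [ddist, e.symm_apply_apply] using (min_le_left _ _).trans (hmono h)
  · simpa only [ddist, e.symm_apply_apply] using (min_le_right _ _).trans (hmono h)

end DiameterDistance

/-- For any subarc `A ⊆ Γ`, the diameter of `A` with respect to the diameter distance
equals the diameter of `A` with respect to the original metric. -/
theorem ddDiam_eq_diam {Γ : Type*} [MetricSpace Γ] (e : S1 ≃ₜ Γ) (a b : S1)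
    (A : Set Γ) (hA : A = e '' arcCCW a b) :
    sSup (Set.image2 (ddist e) A A) = diam A := by
  subst hA
  exact sSup_image2_eq_diam (fun p _ q _ => dist_le_ddist e p q)
    (fun _ hp _ hq => ddist_le_diam_image_arcCCW e hp hq)
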